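/- Let (X, m_s) be an M_s-metric space and T : X → X a self mapping such that m_s(Tx, Tx, Ty) ≤ λ[m_s(x,x,Tx) + m_s(y,y,Ty)] for all x, y ∈ X, where λ ∈ [0,1/2). Fix x_0 ∈ X and define x_{n+1} = T x_n for all n ≥ 0. Then the Picard sequence {x_n} is M_s-Cauchy; in fact, m_s(x_n,x_n,x_m) − m_{s,x_n,x_n,x_m} → 0 and M_{s,x_n,x_n,x_m} − m_{s,x_n,x_n,x_m} → 0 as n, m → ∞. -/

import Mathlib

/-!
Writing `dₙ = m(xₙ, xₙ, xₙ₊₁)`, the Kannan condition applied to `(xₙ, xₙ₊₁)` gives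
`dₙ₊₁ ≤ λ (dₙ + dₙ₊₁)`, so `dₙ ≤ rⁿ d₀` with `r = λ / (1 - λ) < 1`. Applied to `(xₙ, xₖ)` it
bounds `m(xₙ₊₁, xₙ₊₁, xₖ₊₁)` by `λ (dₙ + dₖ)`, and applied to `(xₙ, xₙ)` it bounds the
self-distance `m(xₙ₊₁, xₙ₊₁, xₙ₊₁)` by `2λ dₙ`; both quantities in the Cauchy condition are
squeezed between `0` and these bounds.
-/

open Filter Topology

/-- `msmin m x y z = min {m(x,x,x), m(y,y,y), m(z,z,z)}`. -/
def msmin {X : Type*} (m : X → X → X → ℝ) (x y z : X) : ℝ :=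
  min (m x x x) (min (m y y y) (m z z z))

/-- `msmax m x y z = max {m(x,x,x), m(y,y,y), m(z,z,z)}`. -/
def msmax {X : Type*} (m : X → X → X → ℝ) (x y z : X) : ℝ :=
  max (m x x x) (max (m y y y) (m z z z))

/-- `m` is an `Mₛ`-metric on `X`. -/
structure IsMsMetric {X : Type*} (m : X → X → X → ℝ) : Prop where
  nonneg : ∀ x y z, 0 ≤ m x y z
  eq_iff : ∀ x y, (m x x x = m y y y ∧ m y y y = m x x y) ↔ x = y
  min_le : ∀ x y z, msmin m x y z ≤ m x y z
  symm : ∀ x y, m x x y = m y y x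
  ineq : ∀ x y z t, m x y z - msmin m x y z ≤
    (m x x t - msmin m x x t) + (m y y t - msmin m y y t) + (m z z t - msmin m z z t)

/-- A sequence `x` converges to `a` in the `Mₛ`-metric sense. -/
def MsConvergesTo {X : Type*} (m : X → X → X → ℝ) (x : ℕ → X) (a : X) : Prop :=
  Tendsto (fun n => m (x n) (x n) a - msmin m (x n) (x n) a) atTop (nhds 0)

/-- A sequence `x` is `Mₛ`-Cauchy: the two double limits exist (and are finite). -/
def MsCauchy {X : Type*} (m : X → X → X → ℝ) (x : ℕ → X) : Prop :=
  (∃ L : ℝ, Tendsto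
      (fun p : ℕ × ℕ => m (x p.1) (x p.1) (x p.2) - msmin m (x p.1) (x p.1) (x p.2))
      atTop (nhds L)) ∧
  (∃ L : ℝ, Tendsto
      (fun p : ℕ × ℕ => msmax m (x p.1) (x p.1) (x p.2) - msmin m (x p.1) (x p.1) (x p.2))
      atTop (nhds L))

/-- The `Mₛ`-metric space `(X, m)` is complete. -/
def MsComplete {X : Type*} (m : X → X → X → ℝ) : Prop :=
  ∀ x : ℕ → X, MsCauchy m x → ∃ a : X,
    Tendsto (fun n => m (x n) (x n) a - msmin m (x n) (x n) a) atTop (nhds 0) ∧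
    Tendsto (fun n => msmax m (x n) (x n) a - msmin m (x n) (x n) a) atTop (nhds 0)

theorem tendsto_nat_prod_zero_of_succ_le_add {f : ℕ × ℕ → ℝ} {g : ℕ → ℝ}
    (hf : ∀ p, 0 ≤ f p) (hfg : ∀ n k, f (n + 1, k + 1) ≤ g n + g k)
    (hg : Tendsto g atTop (𝓝 0)) : Tendsto f atTop (𝓝 0) := by
  have hg' : Tendsto (fun n => g (n - 1)) atTop (𝓝 0) := hg.comp (tendsto_sub_atTop_nat 1)
  have hbound : Tendsto (fun p : ℕ × ℕ => g (p.1 - 1) + g (p.2 - 1)) atTop (𝓝 0) := by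
    rw [← prod_atTop_atTop_eq]
    simpa using (hg'.comp tendsto_fst).add (hg'.comp tendsto_snd)
  refine squeeze_zero' (Eventually.of_forall hf) ?_ hbound
  filter_upwards [eventually_ge_atTop (1, 1)] with ⟨n, k⟩ ⟨hn, hk⟩
  obtain ⟨n, rfl⟩ := Nat.exists_eq_add_of_le' hn
  obtain ⟨k, rfl⟩ := Nat.exists_eq_add_of_le' hk
  exact hfg n k

theorem msmin_le_msmax {X : Type*} (m : X → X → X → ℝ) (x y z : X) :
    msmin m x y z ≤ msmax m x y z :=
  (min_le_left _ _).trans (le_max_left _ _)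

namespace IsMsMetric

variable {X : Type*} {m : X → X → X → ℝ}

theorem msmin_nonneg (hm : IsMsMetric m) (x y z : X) : 0 ≤ msmin m x y z :=
  le_min (hm.nonneg _ _ _) (le_min (hm.nonneg _ _ _) (hm.nonneg _ _ _))

theorem msmax_le_add (hm : IsMsMetric m) (x y : X) : msmax m x x y ≤ m x x x + m y y y := by
  have hx := hm.nonneg x x x
  have hy := hm.nonneg y y y
  exact max_le (by linarith) (max_le (by linarith) (by linarith))

end IsMsMetric

def IsKannanContraction {X : Type*} (m : X → X → X → ℝ) (T : X → X) (lam : ℝ) : Prop :=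
  ∀ x y, m (T x) (T x) (T y) ≤ lam * (m x x (T x) + m y y (T y))

namespace IsKannanContraction

variable {X : Type*} {m : X → X → X → ℝ} {T : X → X} {lam : ℝ}

theorem dist_apply_le (hT : IsKannanContraction m T lam) (hl1 : lam < 1) (x : X) :
    m (T x) (T x) (T (T x)) ≤ lam / (1 - lam) * m x x (T x) := by
  have h := hT x (T x)
  rw [div_mul_eq_mul_div, le_div_iff₀ (by linarith)]
  linarith

theorem dist_iterate_le (hT : IsKannanContraction m T lam) (hl0 : 0 ≤ lam) (hl1 : lam < 1)
    (x : X) (n : ℕ) :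
    m (T^[n] x) (T^[n] x) (T (T^[n] x)) ≤ (lam / (1 - lam)) ^ n * m x x (T x) := by
  induction n with
  | zero => simp
  | succ n ih =>
    have hr : 0 ≤ lam / (1 - lam) := div_nonneg hl0 (by linarith)
    rw [Function.iterate_succ_apply']
    calc m (T (T^[n] x)) (T (T^[n] x)) (T (T (T^[n] x)))
        ≤ lam / (1 - lam) * m (T^[n] x) (T^[n] x) (T (T^[n] x)) := hT.dist_apply_le hl1 _
      _ ≤ lam / (1 - lam) * ((lam / (1 - lam)) ^ n * m x x (T x)) := by gcongr
      _ = (lam / (1 - lam)) ^ (n + 1) * m x x (T x) := by ring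

theorem tendsto_dist_iterate (hm : IsMsMetric m) (hT : IsKannanContraction m T lam)
    (hl0 : 0 ≤ lam) (hl1 : lam < 1 / 2) (x : X) :
    Tendsto (fun n => m (T^[n] x) (T^[n] x) (T (T^[n] x))) atTop (𝓝 0) := by
  have hr1 : lam / (1 - lam) < 1 := by rw [div_lt_one (by linarith)]; linarith
  have hgeom : Tendsto (fun n => (lam / (1 - lam)) ^ n * m x x (T x)) atTop (𝓝 0) := by
    simpa using (tendsto_pow_atTop_nhds_zero_of_lt_one
      (div_nonneg hl0 (by linarith)) hr1).mul_const (m x x (T x))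
  exact squeeze_zero (fun n => hm.nonneg _ _ _) (hT.dist_iterate_le hl0 (by linarith) x) hgeom

theorem sub_msmin_le (hm : IsMsMetric m) (hT : IsKannanContraction m T lam) (x y : X) :
    m (T x) (T x) (T y) - msmin m (T x) (T x) (T y) ≤
      lam * m x x (T x) + lam * m y y (T y) := by
  have := hT x y
  have := hm.msmin_nonneg (T x) (T x) (T y)
  linarith

theorem msmax_sub_msmin_le (hm : IsMsMetric m) (hT : IsKannanContraction m T lam) (x y : X) :
    msmax m (T x) (T x) (T y) - msmin m (T x) (T x) (T y) ≤
      2 * lam * m x x (T x) + 2 * lam * m y y (T y) := by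
  have := hT x x
  have := hT y y
  have := hm.msmax_le_add (T x) (T y)
  have := hm.msmin_nonneg (T x) (T x) (T y)
  linarith

end IsKannanContraction

/-- The Picard sequence of a Kannan-type contraction is Mₛ-Cauchy; in fact both double
limits are `0`. -/
theorem picard_msCauchy_of_kannanContraction {X : Type*} (m : X → X → X → ℝ)
    (hm : IsMsMetric m) (T : X → X) (lam : ℝ)
    (hl0 : 0 ≤ lam) (hl1 : lam < 1 / 2)
    (hT : ∀ x y, m (T x) (T x) (T y) ≤ lam * (m x x (T x) + m y y (T y)))
    (x₀ : X) :
    MsCauchy m (fun n => T^[n] x₀) ∧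
    Tendsto (fun p : ℕ × ℕ =>
        m (T^[p.1] x₀) (T^[p.1] x₀) (T^[p.2] x₀) -
          msmin m (T^[p.1] x₀) (T^[p.1] x₀) (T^[p.2] x₀)) atTop (nhds 0) ∧
    Tendsto (fun p : ℕ × ℕ =>
        msmax m (T^[p.1] x₀) (T^[p.1] x₀) (T^[p.2] x₀) -
          msmin m (T^[p.1] x₀) (T^[p.1] x₀) (T^[p.2] x₀)) atTop (nhds 0) := by
  have hT : IsKannanContraction m T lam := hT
  have hd := hT.tendsto_dist_iterate hm hl0 hl1 x₀
  have h₁ := tendsto_nat_prod_zero_of_succ_le_add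
    (fun p => sub_nonneg.2 (hm.min_le (T^[p.1] x₀) (T^[p.1] x₀) (T^[p.2] x₀)))
    (fun n k => by
      simpa only [Function.iterate_succ_apply'] using hT.sub_msmin_le hm (T^[n] x₀) (T^[k] x₀))
    (by simpa only [mul_zero] using hd.const_mul lam)
  have h₂ := tendsto_nat_prod_zero_of_succ_le_add
    (fun p => sub_nonneg.2 (msmin_le_msmax m (T^[p.1] x₀) (T^[p.1] x₀) (T^[p.2] x₀)))
    (fun n k => by
      simpa only [Function.iterate_succ_apply'] using
        hT.msmax_sub_msmin_le hm (T^[n] x₀) (T^[k] x₀))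
    (by simpa only [mul_zero] using hd.const_mul (2 * lam))
  exact ⟨⟨⟨0, h₁⟩, ⟨0, h₂⟩⟩, h₁, h₂⟩
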